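/- arXiv:1110.1696 — 2 statements merged into one kernel-verified Lean document; each statement's English description precedes it below -/
import Mathlib

section
/- Let c ∈ ℂ and η ∈ ℂ, η ≠ 0. Let V be a complex vector space equipped with operators 𝓛ₙ, aₙ (n ∈ ℤ) satisfying the W₂ relations: [𝓛ₙ, 𝓛ₘ] = (n−m)𝓛_{n+m} + (c/12)(n³−n)δ_{n+m,0}, [aₙ, aₘ] = 2ηn δ_{n+m,0}, and [𝓛ₙ, aₘ] = −m a_{n+m}, and assume the module is smooth: for every v ∈ V one has aₙ v = 0 for all sufficiently large n. Define Lₙ = 𝓛ₙ − (1/(4η)) Σ_{m∈ℤ} :a_{n−m} aₘ: (a finite sum on each vector). Then [Lₙ, Lₘ] = (n−m)L_{n+m} + ((c−1)/12)(n³−n)δ_{n+m,0}, [aₙ, aₘ] = 2ηn δ_{n+m,0}, and [Lₙ, aₘ] = 0; that is, V becomes a module over the direct sum of a Virasoro algebra with central charge ĉ = c − 1 and the Heisenberg algebra. -/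
/-!
Write `Sₙ = ∑ⱼ :a_{n-j} a_j:`. Normal ordering changes `a_{n-j} a_j` only by a scalar, so
commutators with `Sₙ` can be computed term by term: `[a_k, Sₙ] = 4ηk a_{n+k}`, and for `𝓛_k`,
which acts on the `a`'s as a derivation of degree `k`,
`[𝓛_k, Sₙ] = (k - n) S_{k+n} - δ_{k+n,0} η(n³ - n)/3`, the scalar coming from re-normal-ordering
the finitely many terms where the two orderings differ. The first identity says that
`Lₙ = 𝓛ₙ - Sₙ/(4η)` commutes with every `a_m`, hence with every `S_m`; so
`[Lₙ, L_m] = [Lₙ, 𝓛_m] = [𝓛ₙ, 𝓛_m] + [𝓛_m, Sₙ]/(4η)`, and the anomaly `η(n³ - n)/3`, divided by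
`4η`, lowers the central charge by one.
-/

noncomputable section

open Finset Function

namespace Sugawara

section PointwiseFinsum

variable {ι R V : Type*} [Semiring R] [AddCommMonoid V] [Module R V]

def pointwiseFinsum (T : ι → Module.End R V) (hT : ∀ v, (fun i ↦ T i v).HasFiniteSupport) :
    Module.End R V where
  toFun v := ∑ᶠ i, T i v
  map_add' x y := by
    simp only [map_add]
    exact finsum_add_distrib (hT x) (hT y)
  map_smul' r x := by
    simp only [map_smul, RingHom.id_apply]
    exact (smul_finsum' r (hT x)).symm

variable {T : ι → Module.End R V} {hT : ∀ v, (fun i ↦ T i v).HasFiniteSupport}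

theorem pointwiseFinsum_apply (v : V) : pointwiseFinsum T hT v = ∑ᶠ i, T i v := rfl

theorem map_pointwiseFinsum (A : Module.End R V) (v : V) :
    A (pointwiseFinsum T hT v) = ∑ᶠ i, A (T i v) :=
  A.toAddMonoidHom.map_finsum (hT v)

theorem commute_pointwiseFinsum {A : Module.End R V} (hA : ∀ i, Commute A (T i)) :
    Commute A (pointwiseFinsum T hT) := by
  ext v
  rw [Module.End.mul_apply, Module.End.mul_apply, map_pointwiseFinsum, pointwiseFinsum_apply]
  exact finsum_congr fun i ↦ LinearMap.congr_fun (hA i) v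

end PointwiseFinsum

theorem commutator_pointwiseFinsum_apply {ι R V : Type*} [Semiring R] [AddCommGroup V]
    [Module R V] {T : ι → Module.End R V} {hT : ∀ v, (fun i ↦ T i v).HasFiniteSupport}
    (A : Module.End R V) (v : V) :
    (A * pointwiseFinsum T hT - pointwiseFinsum T hT * A) v = ∑ᶠ i, (A * T i - T i * A) v := by
  have hAT : (fun i ↦ A (T i v)).HasFiniteSupport := (hT v).fun_comp A.map_zero
  rw [LinearMap.sub_apply, Module.End.mul_apply, Module.End.mul_apply, map_pointwiseFinsum,
    pointwiseFinsum_apply]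
  exact (finsum_sub_distrib hAT (hT (A v))).symm

section Heisenberg

variable {R V : Type*} [CommRing R] [AddCommGroup V] [Module R V]

def IsHeisenberg (η : R) (a : ℤ → Module.End R V) : Prop :=
  ∀ n m : ℤ, a n * a m - a m * a n = (if n + m = 0 then 2 * η * (n : R) else 0) • 1

def IsSmooth (a : ℤ → Module.End R V) : Prop :=
  ∀ v, ∃ N : ℤ, ∀ n, N ≤ n → a n v = 0

def normalOrder (a : ℤ → Module.End R V) (i j : ℤ) : Module.End R V :=
  if i ≤ j then a i * a j else a j * a i

def contraction (η : R) (i j : ℤ) : R :=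
  if i + j = 0 ∧ 0 < i then 2 * η * i else 0

variable {η : R} {a : ℤ → Module.End R V}

theorem IsHeisenberg.mul_eq_normalOrder_add (ha : IsHeisenberg η a) (i j : ℤ) :
    a i * a j = normalOrder a i j + contraction η i j • 1 := by
  unfold normalOrder contraction
  by_cases hij : i ≤ j
  · rw [if_pos hij, if_neg (by omega), zero_smul, add_zero]
  · rw [if_neg hij, ← sub_eq_iff_eq_add', ha i j]
    congr 1
    exact if_congr (by omega) rfl rfl

theorem IsHeisenberg.commutator_normalOrder (ha : IsHeisenberg η a) (A : Module.End R V)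
    (i j : ℤ) :
    A * normalOrder a i j - normalOrder a i j * A =
      (A * a i - a i * A) * a j + a i * (A * a j - a j * A) := by
  rw [eq_sub_of_add_eq (ha.mul_eq_normalOrder_add i j).symm, mul_sub, sub_mul, mul_smul_comm,
    smul_mul_assoc, mul_one, one_mul]
  noncomm_ring

theorem IsHeisenberg.commutator_a_normalOrder (ha : IsHeisenberg η a) (k i j : ℤ) :
    a k * normalOrder a i j - normalOrder a i j * a k =
      (if k + i = 0 then 2 * η * k else 0) • a j + (if k + j = 0 then 2 * η * k else 0) • a i := by
  rw [ha.commutator_normalOrder, ha k i, ha k j, smul_mul_assoc, mul_smul_comm, one_mul, mul_one]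

theorem IsHeisenberg.commutator_normalOrder_of_degree (ha : IsHeisenberg η a)
    {A : Module.End R V} {k : ℤ} (hA : ∀ m, A * a m - a m * A = (-(m : R)) • a (k + m))
    (i j : ℤ) :
    A * normalOrder a i j - normalOrder a i j * A =
      (-(i : R)) • normalOrder a (k + i) j + (-(j : R)) • normalOrder a i (k + j) -
        ((i : R) * contraction η (k + i) j + j * contraction η i (k + j)) • 1 := by
  rw [ha.commutator_normalOrder, hA, hA, smul_mul_assoc, mul_smul_comm,
    ha.mul_eq_normalOrder_add, ha.mul_eq_normalOrder_add]
  module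

end Heisenberg

section SugawaraOperator

variable {R V : Type*} [CommRing R] [AddCommGroup V] [Module R V] {η : R}
  {a : ℤ → Module.End R V}

theorem IsSmooth.hasFiniteSupport_normalOrder (hs : IsSmooth a) (n : ℤ) (v : V) :
    (fun j ↦ normalOrder a (n - j) j v).HasFiniteSupport := by
  obtain ⟨N, hN⟩ := hs v
  refine (Set.finite_Ioo (n - N) N).subset fun j hj ↦ ?_
  by_contra hj'
  rw [Set.mem_Ioo, not_and_or, not_lt, not_lt] at hj'
  apply hj
  show normalOrder a (n - j) j v = 0
  unfold normalOrder
  split_ifs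
  · rw [Module.End.mul_apply, hN j (by omega), map_zero]
  · rw [Module.End.mul_apply, hN (n - j) (by omega), map_zero]

def sugawara (hs : IsSmooth a) (n : ℤ) : Module.End R V :=
  pointwiseFinsum (fun j ↦ normalOrder a (n - j) j) (hs.hasFiniteSupport_normalOrder n)

theorem IsHeisenberg.commutator_a_sugawara (ha : IsHeisenberg η a) (hs : IsSmooth a)
    (k n : ℤ) : a k * sugawara hs n - sugawara hs n * a k = (4 * η * k) • a (n + k) := by
  ext v
  set x := (2 * η * k) • a (n + k) v
  have hterm : ∀ j, (a k * normalOrder a (n - j) j - normalOrder a (n - j) j * a k) v =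
      (Pi.single (n + k) x : ℤ → V) j + (Pi.single (-k) x : ℤ → V) j := by
    intro j
    rw [ha.commutator_a_normalOrder, LinearMap.add_apply, LinearMap.smul_apply,
      LinearMap.smul_apply, Pi.single_apply, Pi.single_apply]
    congr 1 <;> split_ifs <;> first | omega | (subst_vars; simp only [x, zero_smul, sub_neg_eq_add])
  have hsingle (p : ℤ) : (Pi.single p x : ℤ → V).HasFiniteSupport :=
    (Set.finite_singleton p).subset Pi.support_single_subset
  rw [sugawara, commutator_pointwiseFinsum_apply, finsum_congr hterm,
    finsum_add_distrib (hsingle _) (hsingle _), finsum_eq_single _ (n + k)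
    (fun _ h ↦ Pi.single_eq_of_ne h _), finsum_eq_single _ (-k)
    (fun _ h ↦ Pi.single_eq_of_ne h _), Pi.single_eq_same, Pi.single_eq_same, ← two_smul R x,
    smul_smul, LinearMap.smul_apply]
  ring_nf

theorem IsSmooth.commute_sugawara (hs : IsSmooth a) {T : Module.End R V}
    (hT : ∀ m, Commute T (a m)) (n : ℤ) : Commute T (sugawara hs n) := by
  refine commute_pointwiseFinsum fun j ↦ ?_
  unfold normalOrder
  split_ifs
  · exact (hT _).mul_right (hT _)
  · exact (hT _).mul_right (hT _)

theorem finsum_smul_add_smul_shift {F : ℤ → V} (hF : F.HasFiniteSupport) (k n : ℤ) :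
    ∑ᶠ j, ((-((n - j : ℤ) : R)) • F j + (-(j : R)) • F (k + j)) = ((k : R) - n) • ∑ᶠ j, F j := by
  have hFk : (fun j ↦ F (k + j)).HasFiniteSupport :=
    hF.fun_comp_of_injective (add_right_injective k)
  have hshift : ∑ᶠ j : ℤ, (-(j : R)) • F (k + j) = ∑ᶠ j : ℤ, (-((j - k : ℤ) : R)) • F j := by
    rw [← finsum_comp_equiv (Equiv.addLeft k) (f := fun j ↦ (-((j - k : ℤ) : R)) • F j)]
    simp only [Equiv.coe_addLeft, add_sub_cancel_left]
  rw [finsum_add_distrib (hF.fun_smul_right _) (hFk.fun_smul_right _), hshift,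
    ← finsum_add_distrib (hF.fun_smul_right _) (hF.fun_smul_right _), smul_finsum' _ hF]
  refine finsum_congr fun j ↦ ?_
  rw [← add_smul]
  congr 1
  push_cast
  ring

end SugawaraOperator

section CharZeroField

variable {K : Type*} [Field K] [CharZero K]

theorem sum_range_mul_sub (N : ℕ) : ∑ i ∈ range N, (i : K) * (N - i) = (N ^ 3 - N) / 6 := by
  have gauss (N : ℕ) : ∑ i ∈ range N, (i : K) = N * (N - 1) / 2 := by
    induction N with
    | zero => simp
    | succ N ih => rw [sum_range_succ, ih]; push_cast; ring
  induction N with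
  | zero => simp
  | succ N ih =>
    calc ∑ i ∈ range (N + 1), (i : K) * ((N + 1 : ℕ) - i)
        = ∑ i ∈ range N, ((i : K) * (N - i) + i) + N := by
          rw [sum_range_succ]
          congr 1
          · exact sum_congr rfl fun i _ ↦ by push_cast; ring
          · push_cast; ring
      _ = _ := by rw [sum_add_distrib, ih, gauss]; push_cast; ring

theorem finsum_eq_sum_range_of_support {M : Type*} [AddCommMonoid M] {f : ℤ → M} (N : ℕ)
    (hf : ∀ j, f j ≠ 0 → 0 ≤ j ∧ j < N) : ∑ᶠ j, f j = ∑ i ∈ range N, f i := by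
  rw [finsum_eq_sum_of_support_subset f (s := (range N).map Nat.castEmbedding), sum_map]
  · rfl
  intro j hj
  obtain ⟨h0, hN⟩ := hf j hj
  simp only [coe_map, Set.mem_image, mem_coe, mem_range, Nat.castEmbedding_apply]
  exact ⟨j.toNat, by omega, by omega⟩

theorem finsum_mul_sub_indicator (n : ℤ) :
    ∑ᶠ j : ℤ, ((if j < n then (j * (n - j) : K) else 0) - if j < 0 then (j * (n - j) : K) else 0) =
      (n ^ 3 - n) / 6 := by
  obtain ⟨N, rfl | rfl⟩ := n.eq_nat_or_neg
  · rw [finsum_eq_sum_range_of_support N fun j hj ↦ ?_]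
    · calc _ = ∑ i ∈ range N, (i : K) * (N - i) := sum_congr rfl fun i hi ↦ by
              rw [mem_range] at hi
              rw [if_pos (by omega), if_neg (by omega)]
              push_cast; ring
        _ = _ := by rw [sum_range_mul_sub]; push_cast; ring
    · by_contra h
      apply hj
      split_ifs <;> first | omega | ring
  · rw [← finsum_comp_equiv (Equiv.subRight (N : ℤ)),
      finsum_eq_sum_range_of_support N fun j hj ↦ ?_]
    · calc _ = ∑ i ∈ range N, -((i : K) * (N - i)) := sum_congr rfl fun i hi ↦ by
              rw [mem_range] at hi
              simp only [Equiv.subRight_apply]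
              rw [if_neg (by omega), if_pos (by omega)]
              push_cast; ring
        _ = _ := by rw [sum_neg_distrib, sum_range_mul_sub]; push_cast; ring
    · by_contra h
      apply hj
      simp only [Equiv.subRight_apply]
      split_ifs <;> first | omega | ring

/-- The scalars left over when the two products in `[A, :a_{n-j} a_j:]` are normal ordered
(see `IsHeisenberg.commutator_normalOrder_of_degree` with `i = n - j`). -/
theorem finsum_anomaly (η : K) (k n : ℤ) :
    ∑ᶠ j : ℤ, (((n - j : ℤ) : K) * contraction η (k + (n - j)) j +
      j * contraction η (n - j) (k + j)) = if k + n = 0 then η / 3 * (n ^ 3 - n) else 0 := by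
  by_cases hkn : k + n = 0
  · obtain rfl : k = -n := by omega
    rw [if_pos hkn]
    calc _ = ∑ᶠ j : ℤ, 2 * η * ((if j < n then (j * (n - j) : K) else 0) -
            if j < 0 then (j * (n - j) : K) else 0) := finsum_congr fun j ↦ by
          unfold contraction
          split_ifs <;> first | omega | (push_cast; ring)
      _ = η / 3 * (n ^ 3 - n) := by rw [← mul_finsum, finsum_mul_sub_indicator]; ring
  · rw [if_neg hkn]
    refine (finsum_congr fun j ↦ ?_).trans finsum_zero
    rw [contraction, contraction, if_neg (by omega), if_neg (by omega), mul_zero, mul_zero,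
      add_zero]

variable {V : Type*} [AddCommGroup V] [Module K V] {η : K} {a : ℤ → Module.End K V}

theorem IsHeisenberg.commutator_sugawara_of_degree (ha : IsHeisenberg η a) (hs : IsSmooth a)
    {A : Module.End K V} {k : ℤ} (hA : ∀ m, A * a m - a m * A = (-(m : K)) • a (k + m))
    (n : ℤ) :
    A * sugawara hs n - sugawara hs n * A =
      ((k : K) - n) • sugawara hs (k + n) - (if k + n = 0 then η / 3 * (n ^ 3 - n) else 0) • 1 := by
  ext v
  set F : ℤ → V := fun j ↦ normalOrder a (k + n - j) j v
  have hF : F.HasFiniteSupport := hs.hasFiniteSupport_normalOrder (k + n) v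
  set c : ℤ → K := fun j ↦
    ((n - j : ℤ) : K) * contraction η (k + (n - j)) j + j * contraction η (n - j) (k + j)
  set P : ℤ → V := fun j ↦ (-((n - j : ℤ) : K)) • F j + (-(j : K)) • F (k + j)
  have hterm (j : ℤ) :
      (A * normalOrder a (n - j) j - normalOrder a (n - j) j * A) v = P j - c j • v := by
    rw [ha.commutator_normalOrder_of_degree hA]
    simp only [P, F, c, LinearMap.sub_apply, LinearMap.add_apply, LinearMap.smul_apply,
      Module.End.one_apply, ← add_sub_assoc, add_sub_add_left_eq_sub]
  have hP : P.HasFiniteSupport :=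
    (hF.smul_right _).add ((hF.fun_comp_of_injective (add_right_injective k)).smul_right _)
  have hc : (fun j ↦ c j • v).HasFiniteSupport := by
    have htot := (((hs.hasFiniteSupport_normalOrder n v).fun_comp A.map_zero).fun_sub
      (hs.hasFiniteSupport_normalOrder n (A v)))
    simpa only [← Module.End.mul_apply, ← LinearMap.sub_apply, hterm, sub_sub_cancel] using
      hP.fun_sub htot
  rw [sugawara, commutator_pointwiseFinsum_apply, finsum_congr hterm, finsum_sub_distrib hP hc,
    ← finsum_smul, finsum_anomaly, finsum_smul_add_smul_shift hF]
  rfl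

theorem IsHeisenberg.commute_sub_sugawara (ha : IsHeisenberg η a) (hs : IsSmooth a) (hη : η ≠ 0)
    {A : Module.End K V} {k : ℤ} (hA : ∀ m, A * a m - a m * A = (-(m : K)) • a (k + m))
    (m : ℤ) : Commute (A - (1 / (4 * η)) • sugawara hs k) (a m) := by
  rw [Commute, SemiconjBy, ← sub_eq_zero]
  calc (A - (1 / (4 * η)) • sugawara hs k) * a m - a m * (A - (1 / (4 * η)) • sugawara hs k)
      = (A * a m - a m * A) + (1 / (4 * η)) • (a m * sugawara hs k - sugawara hs k * a m) := by
        simp only [mul_sub, sub_mul, mul_smul_comm, smul_mul_assoc, smul_sub]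
        abel
    _ = 0 := by
        have hscalar : 1 / (4 * η) * (4 * η * m) = (m : K) := by field_simp
        rw [hA, ha.commutator_a_sugawara, smul_smul, hscalar, neg_smul,
          neg_add_cancel]

end CharZeroField

end Sugawara

open Sugawara in
/-- Let `(𝓛ₙ, aₙ)` be a smooth module structure for the `W₂` algebra with
central charges `(c, η)`, `η ≠ 0`.  Setting `Lₙ = 𝓛ₙ − (1/(4η)) Σₘ :a_{n−m} aₘ:`
(the normal ordering being `:a_i a_j: = a_i a_j` for `i ≤ j` and `a_j a_i` otherwise; the
sum is finite on each vector by smoothness), the operators `Lₙ, aₙ` satisfy the commutation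
relations of the direct sum of a Virasoro algebra with central charge `ĉ = c − 1` and the
Heisenberg algebra: `[Lₙ, Lₘ] = (n−m)L_{n+m} + ((c−1)/12)(n³−n)δ_{n+m,0}`,
`[aₙ, aₘ] = 2ηn δ_{n+m,0}`, `[Lₙ, aₘ] = 0`. -/
theorem statement3 (c η : ℂ) (hη : η ≠ 0)
    (V : Type*) [AddCommGroup V] [Module ℂ V]
    (El a : ℤ → Module.End ℂ V)
    (hLL : ∀ n m : ℤ,
      El n * El m - El m * El n =
        ((n : ℂ) - (m : ℂ)) • El (n + m) +
          (if n + m = 0 then c / 12 * ((n : ℂ) ^ 3 - (n : ℂ)) else 0) • (1 : Module.End ℂ V))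
    (haa : ∀ n m : ℤ,
      a n * a m - a m * a n =
        (if n + m = 0 then 2 * η * (n : ℂ) else 0) • (1 : Module.End ℂ V))
    (hLa : ∀ n m : ℤ, El n * a m - a m * El n = (-(m : ℂ)) • a (n + m))
    (hsmooth : ∀ v : V, ∃ N : ℤ, ∀ n : ℤ, N ≤ n → a n v = 0)
    (L : ℤ → Module.End ℂ V)
    (hL : ∀ (n : ℤ) (v : V),
      L n v = El n v -
        (1 / (4 * η)) •
          ∑ᶠ m : ℤ, (if n - m ≤ m then a (n - m) * a m else a m * a (n - m)) v) :
    (∀ n m : ℤ,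
      L n * L m - L m * L n =
        ((n : ℂ) - (m : ℂ)) • L (n + m) +
          (if n + m = 0 then (c - 1) / 12 * ((n : ℂ) ^ 3 - (n : ℂ)) else 0) •
            (1 : Module.End ℂ V)) ∧
    (∀ n m : ℤ,
      a n * a m - a m * a n =
        (if n + m = 0 then 2 * η * (n : ℂ) else 0) • (1 : Module.End ℂ V)) ∧
    (∀ n m : ℤ, L n * a m = a m * L n) := by
  have ha : IsHeisenberg η a := haa
  have hs : IsSmooth a := hsmooth
  have hL_eq (n : ℤ) : L n = El n - (1 / (4 * η)) • sugawara hs n := LinearMap.ext (hL n)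
  have hLa_comm (n m : ℤ) : Commute (L n) (a m) := by
    rw [hL_eq]
    exact ha.commute_sub_sugawara hs hη (hLa n) m
  refine ⟨fun n m ↦ ?_, haa, hLa_comm⟩
  have hLS : Commute (L n) (sugawara hs m) := hs.commute_sugawara (hLa_comm n) m
  calc L n * L m - L m * L n = L n * El m - El m * L n := by
        rw [hL_eq m, mul_sub, sub_mul, mul_smul_comm, smul_mul_assoc, hLS.eq]
        abel
    _ = (El n * El m - El m * El n) +
          (1 / (4 * η)) • (El m * sugawara hs n - sugawara hs n * El m) := by
        rw [hL_eq n]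
        simp only [mul_sub, sub_mul, mul_smul_comm, smul_mul_assoc, smul_sub]
        abel
    _ = _ := by
        rw [hLL, ha.commutator_sugawara_of_degree hs (hLa m), hL_eq, add_comm m n]
        split_ifs with h
        · obtain rfl : m = -n := by omega
          push_cast
          match_scalars <;> field_simp <;> ring
        · match_scalars <;> field_simp <;> ring
end
end

section
/- Let M be the ghost Fock module for the two fermionic pairs (b, c) and (ψ, χ), and let L^M_n (n ∈ ℤ) denote the modes of the field L^M(z) = 2:∂b(z)c(z): + :b(z)∂c(z): + :∂ψ(z)χ(z):. Then the operators L^M_n satisfy the Virasoro relations with central charge −28: [L^M_n, L^M_m] = (n−m) L^M_{n+m} − (28/12)(n³−n) δ_{n+m,0}. -/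
noncomputable section

/-- The ghost Fock module for the two fermionic pairs `(b, c)` and `(ψ, χ)`:
odd modes with the stated anticommutation relations, a nonzero vacuum vector `𝟏` with
`cₖ𝟏 = 0 (k ≥ 2)`, `bₖ𝟏 = 0 (k ≥ −1)`, `ψₖ𝟏 = 0 (k ≥ 1)`, `χₖ𝟏 = 0 (k ≥ 0)`,
which generates the module. -/
structure GhostFock (M : Type*) [AddCommGroup M] [Module ℂ M] where
  b : ℤ → Module.End ℂ M
  c : ℤ → Module.End ℂ M
  ψ : ℤ → Module.End ℂ M
  χ : ℤ → Module.End ℂ M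
  acomm_bc : ∀ n m : ℤ, b n * c m + c m * b n =
    (if n + m = 0 then (1 : ℂ) else 0) • (1 : Module.End ℂ M)
  acomm_bb : ∀ n m : ℤ, b n * b m + b m * b n = 0
  acomm_cc : ∀ n m : ℤ, c n * c m + c m * c n = 0
  acomm_ψχ : ∀ n m : ℤ, ψ n * χ m + χ m * ψ n =
    (if n + m = 0 then (1 : ℂ) else 0) • (1 : Module.End ℂ M)
  acomm_ψψ : ∀ n m : ℤ, ψ n * ψ m + ψ m * ψ n = 0
  acomm_χχ : ∀ n m : ℤ, χ n * χ m + χ m * χ n = 0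
  acomm_bψ : ∀ n m : ℤ, b n * ψ m + ψ m * b n = 0
  acomm_bχ : ∀ n m : ℤ, b n * χ m + χ m * b n = 0
  acomm_cψ : ∀ n m : ℤ, c n * ψ m + ψ m * c n = 0
  acomm_cχ : ∀ n m : ℤ, c n * χ m + χ m * c n = 0
  vac : M
  vac_ne : vac ≠ 0
  c_vac : ∀ k : ℤ, 2 ≤ k → c k vac = 0
  b_vac : ∀ k : ℤ, -1 ≤ k → b k vac = 0
  ψ_vac : ∀ k : ℤ, 1 ≤ k → ψ k vac = 0
  χ_vac : ∀ k : ℤ, 0 ≤ k → χ k vac = 0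
  generates : ∀ N : Submodule ℂ M, vac ∈ N →
    (∀ (n : ℤ) (x : M), x ∈ N → b n x ∈ N ∧ c n x ∈ N ∧ ψ n x ∈ N ∧ χ n x ∈ N) →
    N = ⊤

variable {M : Type*} [AddCommGroup M] [Module ℂ M]

/-- The normal-ordered quadratic `:b_i c_j:` (annihilation operators, i.e. `b_i` with
`i ≥ −1` and `c_j` with `j ≥ 2`, are moved to the right with the sign of the odd
permutation). -/
def GhostFock.nobc (G : GhostFock M) (i j : ℤ) : Module.End ℂ M :=
  if i ≤ -2 then G.b i * G.c j else -(G.c j * G.b i)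

/-- The normal-ordered quadratic `:ψ_i χ_j:` (`ψ_i` annihilates for `i ≥ 1`). -/
def GhostFock.noψχ (G : GhostFock M) (i j : ℤ) : Module.End ℂ M :=
  if i ≤ 0 then G.ψ i * G.χ j else -(G.χ j * G.ψ i)

/-!
For a pair `(B, C)` of fermionic modes, normally ordered so that `B_i` (`i > θ`) and `C_j`
(`j ≥ -θ`) annihilate the vacuum, put `L_n = Σ_s (θ - s - α(n + 1)) :B_s C_{n-s}:`.
The anticommutation relations give `[L_n, B_k] ∝ B_{n+k}` and `[L_n, C_k] ∝ C_{n+k}`, so by the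
Leibniz rule `[L_n, :B_s C_j:]` is a combination of two quadratics plus the c-number produced by
normally ordering them again. Summing over `s`, the quadratic terms recombine into
`(n - m) L_{n+m}` and the c-numbers form a finite sum of a quadratic polynomial in `s`, equal to
`-(6α² + 6α + 1)(n³ - n)/6`. The `(b, c)` system has `(θ, α) = (-2, 1)` (central charge
`-26`), the `(ψ, χ)` system `(θ, α) = (0, 0)` (central charge `-2`); their operators commute,
so the central charges add up to `-28`. All the sums are finite on every vector, because they
are on the vacuum and every mode preserves this.
-/

open Function

lemma mul_mul_sub_mul_mul_eq_anticomm {A : Type*} [Ring A] (a b c : A) :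
    a * (b * c) - b * c * a = (a * b + b * a) * c - b * (a * c + c * a) := by
  noncomm_ring

lemma add_mul_add_sub_add_mul_add {A : Type*} [Ring A] {a b c d : A} (had : Commute a d)
    (hbc : Commute b c) :
    (a + b) * (c + d) - (c + d) * (a + b) = (a * c - c * a) + (b * d - d * b) := by
  simp only [add_mul, mul_add, had.eq, hbc.eq]
  abel

lemma sum_range_sub_mul_sub {R : Type*} [Field R] [CharZero R] (a b : R) (N : ℕ) :
    ∑ u ∈ Finset.range N, (a - u) * (b - u)
      = N * a * b - (a + b) * (N * (N - 1) / 2) + N * (N - 1) * (2 * N - 1) / 6 := by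
  induction N with
  | zero => simp
  | succ N ih => rw [Finset.sum_range_succ, ih]; push_cast; field_simp; ring

structure FermionPair (A : Type*) [Ring A] [Algebra ℂ A] where
  B : ℤ → A
  C : ℤ → A
  anticomm_BC : ∀ n m : ℤ,
    B n * C m + C m * B n = (if n + m = 0 then (1 : ℂ) else 0) • (1 : A)
  anticomm_BB : ∀ n m : ℤ, B n * B m + B m * B n = 0
  anticomm_CC : ∀ n m : ℤ, C n * C m + C m * C n = 0

namespace FermionPair

def contraction (θ i j : ℤ) : ℂ := if θ < i ∧ i + j = 0 then 1 else 0

section Algebra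

variable {A : Type*} [Ring A] [Algebra ℂ A] (P : FermionPair A) (θ : ℤ)

/-- `θ` is the largest index of a creation operator `B_θ`. -/
def normalOrder (i j : ℤ) : A := if i ≤ θ then P.B i * P.C j else -(P.C j * P.B i)

lemma normalOrder_eq (i j : ℤ) :
    P.normalOrder θ i j = P.B i * P.C j - contraction θ i j • 1 := by
  unfold normalOrder contraction
  by_cases h : i ≤ θ
  · simp [h, not_lt.mpr h]
  · simp only [h, if_false, not_le.mp h, true_and, ← P.anticomm_BC]
    abel

lemma mul_normalOrder_sub (x : A) (s j : ℤ) :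
    x * P.normalOrder θ s j - P.normalOrder θ s j * x
      = x * (P.B s * P.C j) - P.B s * P.C j * x := by
  rw [normalOrder_eq, mul_sub, sub_mul, mul_smul_comm, smul_mul_assoc, mul_one, one_mul]
  abel

lemma normalOrder_mul_B_sub (s j k : ℤ) :
    P.normalOrder θ s j * P.B k - P.B k * P.normalOrder θ s j
      = (if j + k = 0 then (1 : ℂ) else 0) • P.B s := by
  rw [← neg_sub, mul_normalOrder_sub, mul_mul_sub_mul_mul_eq_anticomm, P.anticomm_BB,
    P.anticomm_BC, add_comm k]
  simp

lemma normalOrder_mul_C_sub (s j k : ℤ) :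
    P.normalOrder θ s j * P.C k - P.C k * P.normalOrder θ s j
      = -((if s + k = 0 then (1 : ℂ) else 0) • P.C j) := by
  rw [← neg_sub, mul_normalOrder_sub, mul_mul_sub_mul_mul_eq_anticomm, P.anticomm_CC,
    add_comm (P.C k * P.B s), P.anticomm_BC]
  simp

lemma commute_normalOrder_of_anticomm {x : A} {s j : ℤ} (hB : x * P.B s + P.B s * x = 0)
    (hC : x * P.C j + P.C j * x = 0) : Commute x (P.normalOrder θ s j) := by
  rw [Commute, SemiconjBy, ← sub_eq_zero, mul_normalOrder_sub, mul_mul_sub_mul_mul_eq_anticomm,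
    hB, hC]
  simp

lemma commute_normalOrder_of_commute {x : A} {s j : ℤ} (hB : Commute x (P.B s))
    (hC : Commute x (P.C j)) : Commute x (P.normalOrder θ s j) := by
  rw [normalOrder_eq]
  exact (hB.mul_right hC).sub_right ((Commute.one_right x).smul_right _)

lemma mul_normalOrder_sub_of_mul_B_C {x : A} {n : ℤ} {p q : ℤ → ℂ}
    (hB : ∀ k, x * P.B k - P.B k * x = p k • P.B (n + k))
    (hC : ∀ k, x * P.C k - P.C k * x = q k • P.C (n + k)) (s j : ℤ) :
    x * P.normalOrder θ s j - P.normalOrder θ s j * x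
      = p s • P.normalOrder θ (n + s) j + q j • P.normalOrder θ s (n + j)
        + (p s * contraction θ (n + s) j + q j * contraction θ s (n + j)) • 1 := by
  have leibniz : x * (P.B s * P.C j) - P.B s * P.C j * x
      = (x * P.B s - P.B s * x) * P.C j + P.B s * (x * P.C j - P.C j * x) := by noncomm_ring
  rw [mul_normalOrder_sub, leibniz, hB, hC, normalOrder_eq, normalOrder_eq]
  simp only [smul_mul_assoc, mul_smul_comm, smul_sub, add_smul, smul_smul]
  abel

end Algebra

section Finiteness

variable (P : FermionPair (Module.End ℂ M)) (θ : ℤ)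

lemma normalOrder_apply_B_apply (s j k : ℤ) (w : M) :
    P.normalOrder θ s j (P.B k w)
      = P.B k (P.normalOrder θ s j w) + (if j + k = 0 then (1 : ℂ) else 0) • P.B s w := by
  rw [← LinearMap.smul_apply, ← P.normalOrder_mul_B_sub θ s j k]
  simp

lemma normalOrder_apply_C_apply (s j k : ℤ) (w : M) :
    P.normalOrder θ s j (P.C k w)
      = P.C k (P.normalOrder θ s j w) - (if s + k = 0 then (1 : ℂ) else 0) • P.C j w := by
  rw [← LinearMap.smul_apply, sub_eq_add_neg, ← LinearMap.neg_apply,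
    ← P.normalOrder_mul_C_sub θ s j k]
  simp

/-- The modes `L_n` below are `finsum`s, which are junk (`0`) unless only finitely many terms are
nonzero; this is the condition that they are not. -/
def FiniteAt (w : M) : Prop := ∀ r : ℤ, HasFiniteSupport fun s ↦ P.normalOrder θ s (r - s) w

def finiteAtSubmodule : Submodule ℂ M where
  carrier := {w | P.FiniteAt θ w}
  zero_mem' r := by simp [HasFiniteSupport]
  add_mem' hv hw r := by simpa using (hv r).fun_add (hw r)
  smul_mem' c w hw r := by simpa using (hw r).fun_comp (smul_zero c)

lemma finiteAt_of_commute {x : Module.End ℂ M} (hx : ∀ s j, Commute x (P.normalOrder θ s j))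
    {w : M} (hw : P.FiniteAt θ w) : P.FiniteAt θ (x w) := by
  intro r
  simp only [← Module.End.mul_apply, ← (hx _ _).eq]
  exact (hw r).fun_comp (map_zero x)

lemma finiteAt_B {w : M} (hw : P.FiniteAt θ w) (k : ℤ) : P.FiniteAt θ (P.B k w) := by
  intro r
  simp only [normalOrder_apply_B_apply]
  refine ((hw r).fun_comp (map_zero _)).add ((Set.finite_singleton (r + k)).subset fun s hs ↦ ?_)
  rw [Set.mem_singleton_iff]
  by_contra h
  exact hs (by simp [show r - s + k ≠ 0 by omega])

lemma finiteAt_C {w : M} (hw : P.FiniteAt θ w) (k : ℤ) : P.FiniteAt θ (P.C k w) := by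
  intro r
  simp only [normalOrder_apply_C_apply]
  refine ((hw r).fun_comp (map_zero _)).sub ((Set.finite_singleton (-k)).subset fun s hs ↦ ?_)
  rw [Set.mem_singleton_iff]
  by_contra h
  exact hs (by simp [show s + k ≠ 0 by omega])

lemma finiteAt_of_annihilated {v : M} (hB : ∀ k, θ < k → P.B k v = 0)
    (hC : ∀ k, -θ ≤ k → P.C k v = 0) : P.FiniteAt θ v := by
  intro r
  refine (Set.finite_Ioc (r + θ) θ).subset fun s hs ↦ ?_
  rw [Set.mem_Ioc]
  by_contra h
  apply hs
  show P.normalOrder θ s (r - s) v = 0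
  unfold normalOrder
  split_ifs with hs'
  · simp [hC (r - s) (by omega)]
  · simp [hB s (by omega)]

end Finiteness

/-- `coeff θ α n s` is the coefficient of `:B_s C_{n-s}:` in `L_n`. For `(θ, α) = (-2, 1)` it is
the coefficient `2(-s-2) + (s-n+1)` of `2:∂b c: + :b ∂c:`, for `(θ, α) = (0, 0)` the
coefficient `-s` of `:∂ψ χ:`. -/
def coeff (θ : ℤ) (α : ℂ) (n s : ℤ) : ℂ := θ - s - α * (n + 1)

lemma coeff_mul_sub_coeff_mul (θ : ℤ) (α : ℂ) (n m t : ℤ) :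
    coeff θ α m (t - n) * coeff θ α n t - coeff θ α m t * coeff θ α n (t - m)
      = (n - m) * coeff θ α (n + m) t := by
  simp only [coeff]; push_cast; ring

def crossing (θ s t : ℤ) : ℂ := (if θ < t then 1 else 0) - (if θ < s then 1 else 0)

lemma coeff_mul_contraction_add (θ : ℤ) (α : ℂ) (n m s : ℤ) :
    coeff θ α n (n + s) * contraction θ (n + s) (m - s)
        + -coeff θ α n (-(m - s)) * contraction θ s (n + (m - s))
      = if n + m = 0 then coeff θ α n (n + s) * crossing θ s (n + s) else 0 := by
  by_cases h : n + m = 0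
  · simp only [contraction, crossing, show -(m - s) = n + s by omega, if_pos h]
    split_ifs <;> first | omega | ring
  · simp [contraction, h, show s + (n + (m - s)) ≠ 0 by omega]

lemma hasFiniteSupport_crossing (θ n : ℤ) :
    HasFiniteSupport fun s ↦ crossing θ s (n + s) := by
  refine (Set.finite_uIcc (θ - n) θ).subset fun s hs ↦ ?_
  rw [Set.mem_uIcc]
  by_contra h
  apply hs
  simp only [crossing]
  split_ifs <;> first | omega | simp

def centralSum (θ : ℤ) (α : ℂ) (n : ℤ) : ℂ :=
  ∑ᶠ s, coeff θ α (-n) s * (coeff θ α n (n + s) * crossing θ s (n + s))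

lemma hasFiniteSupport_coeff_mul_ite (θ : ℤ) (α : ℂ) (n m : ℤ) :
    HasFiniteSupport fun s ↦
      coeff θ α m s * if n + m = 0 then coeff θ α n (n + s) * crossing θ s (n + s) else 0 := by
  split_ifs
  · exact ((hasFiniteSupport_crossing θ n).fun_mul_right _).fun_mul_right _
  · simp [HasFiniteSupport]

lemma finsum_coeff_mul_ite (θ : ℤ) (α : ℂ) (n m : ℤ) :
    ∑ᶠ s, (coeff θ α m s *
        if n + m = 0 then coeff θ α n (n + s) * crossing θ s (n + s) else 0)
      = if n + m = 0 then centralSum θ α n else 0 := by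
  split_ifs with h
  · obtain rfl : m = -n := by omega
    rfl
  · simp

lemma centralSum_neg (θ : ℤ) (α : ℂ) (n : ℤ) :
    centralSum θ α (-n) = -centralSum θ α n := by
  rw [centralSum, centralSum, ← finsum_comp_equiv (Equiv.addRight n), ← finsum_neg_distrib]
  refine finsum_congr fun t ↦ ?_
  simp only [Equiv.coe_addRight, neg_neg, crossing, add_comm t n, neg_add_cancel_left]
  ring

lemma centralSum_natCast (θ : ℤ) (α : ℂ) (N : ℕ) :
    centralSum θ α N = -(6 * α ^ 2 + 6 * α + 1) / 6 * ((N : ℂ) ^ 3 - N) := by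
  have hsupp :
      support (fun s ↦ coeff θ α (-N) s * (coeff θ α N (N + s) * crossing θ s (N + s)))
        ⊆ (Finset.range N).image fun u : ℕ ↦ θ - u := by
    intro s hs
    have hs' : θ - N < s ∧ s ≤ θ := by
      by_contra h
      apply hs
      simp only [crossing]
      split_ifs <;> first | omega | simp
    simp only [Finset.coe_image, Finset.coe_range, Set.mem_image, Set.mem_Iio]
    exact ⟨(θ - s).toNat, by omega, by omega⟩
  rw [centralSum, finsum_eq_sum_of_support_subset _ hsupp,
    Finset.sum_image fun u _ v _ h ↦ by simpa using h]
  calc _ = ∑ u ∈ Finset.range N, (α * (1 - N) - u) * (N + α * (N + 1) - u) := by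
        refine Finset.sum_congr rfl fun u hu ↦ ?_
        rw [Finset.mem_range] at hu
        simp only [crossing, coeff, if_pos (show θ < N + (θ - u) by omega),
          if_neg (show ¬θ < θ - u by omega)]
        push_cast; ring
    _ = _ := by rw [sum_range_sub_mul_sub]; ring

lemma centralSum_eq (θ : ℤ) (α : ℂ) (n : ℤ) :
    centralSum θ α n = -(6 * α ^ 2 + 6 * α + 1) / 6 * ((n : ℂ) ^ 3 - n) := by
  obtain ⟨N, rfl | rfl⟩ := Int.eq_nat_or_neg n
  · exact centralSum_natCast θ α N
  · rw [centralSum_neg, centralSum_natCast]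
    push_cast; ring

section Virasoro

variable (P : FermionPair (Module.End ℂ M)) (θ : ℤ) (α : ℂ) (hfin : ∀ w, P.FiniteAt θ w)

def virasoro (n : ℤ) : Module.End ℂ M where
  toFun w := ∑ᶠ s, coeff θ α n s • P.normalOrder θ s (n - s) w
  map_add' v w := by
    simp only [map_add, smul_add]
    exact finsum_add_distrib ((hfin v n).fun_smul_right _) ((hfin w n).fun_smul_right _)
  map_smul' c w := by
    simp only [map_smul, smul_comm _ c, RingHom.id_apply, smul_finsum]

lemma virasoro_apply (n : ℤ) (w : M) :
    P.virasoro θ α hfin n w = ∑ᶠ s, coeff θ α n s • P.normalOrder θ s (n - s) w := rfl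

lemma mul_virasoro_sub_apply (x : Module.End ℂ M) (n : ℤ) (w : M) :
    (x * P.virasoro θ α hfin n - P.virasoro θ α hfin n * x) w
      = ∑ᶠ s, coeff θ α n s •
          (x * P.normalOrder θ s (n - s) - P.normalOrder θ s (n - s) * x) w := by
  simp only [LinearMap.sub_apply, Module.End.mul_apply, virasoro_apply,
    map_finsum x ((hfin w n).fun_smul_right _), map_smul, smul_sub]
  exact (finsum_sub_distrib ((hfin w n).fun_comp (map_zero x) |>.fun_smul_right _)
    ((hfin (x w) n).fun_smul_right _)).symm

lemma virasoro_mul_sub_apply (x : Module.End ℂ M) (n : ℤ) (w : M) :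
    (P.virasoro θ α hfin n * x - x * P.virasoro θ α hfin n) w
      = ∑ᶠ s, coeff θ α n s •
          (P.normalOrder θ s (n - s) * x - x * P.normalOrder θ s (n - s)) w := by
  rw [← neg_sub, LinearMap.neg_apply, mul_virasoro_sub_apply, ← finsum_neg_distrib]
  simp only [← neg_sub (P.normalOrder θ _ _ * x), LinearMap.neg_apply, smul_neg, neg_neg]

lemma commute_virasoro {x : Module.End ℂ M} (hx : ∀ s j, Commute x (P.normalOrder θ s j))
    (n : ℤ) : Commute x (P.virasoro θ α hfin n) := by
  rw [Commute, SemiconjBy, ← sub_eq_zero]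
  ext w
  simp only [mul_virasoro_sub_apply, (hx _ _).eq, sub_self, LinearMap.zero_apply, smul_zero,
    finsum_zero]

lemma virasoro_mul_B_sub (n k : ℤ) :
    P.virasoro θ α hfin n * P.B k - P.B k * P.virasoro θ α hfin n
      = coeff θ α n (n + k) • P.B (n + k) := by
  ext w
  rw [virasoro_mul_sub_apply, finsum_eq_single _ (n + k) fun s hs ↦ by
    simp [normalOrder_mul_B_sub, show n - s + k ≠ 0 by omega]]
  simp [normalOrder_mul_B_sub]

lemma virasoro_mul_C_sub (n k : ℤ) :
    P.virasoro θ α hfin n * P.C k - P.C k * P.virasoro θ α hfin n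
      = -coeff θ α n (-k) • P.C (n + k) := by
  ext w
  rw [virasoro_mul_sub_apply, finsum_eq_single _ (-k) fun s hs ↦ by
    simp [normalOrder_mul_C_sub, show s + k ≠ 0 by omega]]
  rw [normalOrder_mul_C_sub]
  simp [show n - -k = n + k by ring]

lemma virasoro_mul_normalOrder_sub (n m s : ℤ) :
    P.virasoro θ α hfin n * P.normalOrder θ s (m - s)
        - P.normalOrder θ s (m - s) * P.virasoro θ α hfin n
      = coeff θ α n (n + s) • P.normalOrder θ (n + s) (m - s)
        - coeff θ α n (s - m) • P.normalOrder θ s (n + m - s)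
        + (if n + m = 0 then coeff θ α n (n + s) * crossing θ s (n + s) else 0) • 1 := by
  rw [P.mul_normalOrder_sub_of_mul_B_C θ (P.virasoro_mul_B_sub θ α hfin n)
    (P.virasoro_mul_C_sub θ α hfin n), coeff_mul_contraction_add,
    show -(m - s) = s - m by ring, show n + (m - s) = n + m - s by ring, neg_smul,
    ← sub_eq_add_neg]

theorem virasoro_mul_virasoro_sub (n m : ℤ) :
    P.virasoro θ α hfin n * P.virasoro θ α hfin m
        - P.virasoro θ α hfin m * P.virasoro θ α hfin n
      = ((n : ℂ) - m) • P.virasoro θ α hfin (n + m)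
        + (if n + m = 0 then centralSum θ α n else 0) • 1 := by
  ext w
  set L := P.virasoro θ α hfin
  let N t := P.normalOrder θ t (n + m - t) w
  let G₁ t := (coeff θ α m (t - n) * coeff θ α n t) • N t
  let G₂ t := -(coeff θ α m t * coeff θ α n (t - m)) • N t
  let c s :=
    coeff θ α m s * if n + m = 0 then coeff θ α n (n + s) * crossing θ s (n + s) else 0
  have hG₁ : HasFiniteSupport G₁ := (hfin w (n + m)).fun_smul_right _
  have hG₂ : HasFiniteSupport G₂ := (hfin w (n + m)).fun_smul_right _
  have hG₁' := hG₁.fun_comp_of_injective (add_right_injective n)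
  have hc := (hasFiniteSupport_coeff_mul_ite θ α n m).fun_smul_left fun _ ↦ w
  have summand (s : ℤ) : coeff θ α m s • (L n * P.normalOrder θ s (m - s)
      - P.normalOrder θ s (m - s) * L n) w = G₁ (n + s) + G₂ s + c s • w := by
    rw [P.virasoro_mul_normalOrder_sub]
    simp only [G₁, G₂, c, N, show n + s - n = s by ring, show n + m - (n + s) = m - s by ring,
      LinearMap.add_apply, LinearMap.sub_apply, LinearMap.smul_apply, Module.End.one_apply]
    module
  calc (L n * L m - L m * L n) w
      = ∑ᶠ s, (G₁ (n + s) + G₂ s + c s • w) := by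
        rw [P.mul_virasoro_sub_apply]; exact finsum_congr summand
    _ = ∑ᶠ t, (G₁ t + G₂ t) + (∑ᶠ s, c s) • w := by
        rw [finsum_add_distrib (hG₁'.fun_add hG₂) hc, finsum_add_distrib hG₁' hG₂,
          finsum_add_distrib hG₁ hG₂, finsum_smul,
          show ∑ᶠ s, G₁ (n + s) = ∑ᶠ t, G₁ t from finsum_comp_equiv (Equiv.addLeft n)]
    _ = ((n : ℂ) - m) • L (n + m) w + (if n + m = 0 then centralSum θ α n else 0) • w := by
        rw [finsum_coeff_mul_ite, virasoro_apply, smul_finsum]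
        congr 1
        refine finsum_congr fun t ↦ ?_
        rw [← add_smul, ← sub_eq_add_neg, coeff_mul_sub_coeff_mul, smul_smul]
    _ = _ := by split_ifs <;> simp

end Virasoro

end FermionPair

namespace GhostFock

variable (G : GhostFock M)

def bc : FermionPair (Module.End ℂ M) := ⟨G.b, G.c, G.acomm_bc, G.acomm_bb, G.acomm_cc⟩

def ψχ : FermionPair (Module.End ℂ M) :=
  ⟨G.ψ, G.χ, G.acomm_ψχ, G.acomm_ψψ, G.acomm_χχ⟩

lemma commute_b_normalOrder_ψχ (k s j : ℤ) : Commute (G.b k) (G.ψχ.normalOrder 0 s j) :=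
  G.ψχ.commute_normalOrder_of_anticomm 0 (G.acomm_bψ k s) (G.acomm_bχ k j)

lemma commute_c_normalOrder_ψχ (k s j : ℤ) : Commute (G.c k) (G.ψχ.normalOrder 0 s j) :=
  G.ψχ.commute_normalOrder_of_anticomm 0 (G.acomm_cψ k s) (G.acomm_cχ k j)

lemma commute_ψ_normalOrder_bc (k s j : ℤ) : Commute (G.ψ k) (G.bc.normalOrder (-2) s j) :=
  G.bc.commute_normalOrder_of_anticomm (-2) (by rw [add_comm]; exact G.acomm_bψ s k)
    (by rw [add_comm]; exact G.acomm_cψ j k)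

lemma commute_χ_normalOrder_bc (k s j : ℤ) : Commute (G.χ k) (G.bc.normalOrder (-2) s j) :=
  G.bc.commute_normalOrder_of_anticomm (-2) (by rw [add_comm]; exact G.acomm_bχ s k)
    (by rw [add_comm]; exact G.acomm_cχ j k)

lemma commute_normalOrder_ψχ_normalOrder_bc (s j s' j' : ℤ) :
    Commute (G.ψχ.normalOrder 0 s j) (G.bc.normalOrder (-2) s' j') :=
  (G.ψχ.commute_normalOrder_of_commute 0 (G.commute_ψ_normalOrder_bc s s' j').symm
    (G.commute_χ_normalOrder_bc j s' j').symm).symm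

lemma finiteAt (w : M) : G.bc.FiniteAt (-2) w ∧ G.ψχ.FiniteAt 0 w := by
  let N := G.bc.finiteAtSubmodule (-2) ⊓ G.ψχ.finiteAtSubmodule 0
  have hvac : G.vac ∈ N :=
    ⟨G.bc.finiteAt_of_annihilated (-2) (fun k hk ↦ G.b_vac k (by omega))
        (fun k hk ↦ G.c_vac k (by omega)),
      G.ψχ.finiteAt_of_annihilated 0 (fun k hk ↦ G.ψ_vac k hk)
        (fun k hk ↦ G.χ_vac k (by omega))⟩
  have hN : N = ⊤ := G.generates N hvac fun k x ⟨hbc, hψχ⟩ ↦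
    ⟨⟨G.bc.finiteAt_B (-2) hbc k,
        G.ψχ.finiteAt_of_commute 0 (G.commute_b_normalOrder_ψχ k) hψχ⟩,
      ⟨G.bc.finiteAt_C (-2) hbc k,
        G.ψχ.finiteAt_of_commute 0 (G.commute_c_normalOrder_ψχ k) hψχ⟩,
      ⟨G.bc.finiteAt_of_commute (-2) (G.commute_ψ_normalOrder_bc k) hbc,
        G.ψχ.finiteAt_B 0 hψχ k⟩,
      ⟨G.bc.finiteAt_of_commute (-2) (G.commute_χ_normalOrder_bc k) hbc,
        G.ψχ.finiteAt_C 0 hψχ k⟩⟩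
  exact (hN ▸ Submodule.mem_top : w ∈ N)

end GhostFock

open FermionPair in
/-- With `b(z) = Σ bₘ z^{−m−2}`, `c(z) = Σ cₘ z^{−m+1}`, `ψ(z) = Σ ψₘ z^{−m}`,
`χ(z) = Σ χₘ z^{−m−1}`, the modes of `L^M(z)` are
`L^M_n = Σₘ (2(−m−2) + (m−n+1)) :bₘ c_{n−m}: + Σₘ (−m) :ψₘ χ_{n−m}:`. -/
theorem statement4 (G : GhostFock M)
    (LM : ℤ → Module.End ℂ M)
    (hLM : ∀ (n : ℤ) (w : M),
      LM n w = ∑ᶠ m : ℤ,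
        ((2 * (-(m : ℂ) - 2) + ((m : ℂ) - (n : ℂ) + 1)) • G.nobc m (n - m) +
          (-(m : ℂ)) • G.noψχ m (n - m)) w) :
    ∀ n m : ℤ,
      LM n * LM m - LM m * LM n =
        ((n : ℂ) - (m : ℂ)) • LM (n + m) +
          (if n + m = 0 then (-28 : ℂ) / 12 * ((n : ℂ) ^ 3 - (n : ℂ)) else 0) •
            (1 : Module.End ℂ M) := by
  set Lbc := G.bc.virasoro (-2) 1 fun w ↦ (G.finiteAt w).1
  set Lψχ := G.ψχ.virasoro 0 0 fun w ↦ (G.finiteAt w).2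
  have hsplit (n : ℤ) : LM n = Lbc n + Lψχ n := by
    ext w
    rw [hLM, LinearMap.add_apply, virasoro_apply, virasoro_apply,
      ← finsum_add_distrib (((G.finiteAt w).1 n).fun_smul_right _)
        (((G.finiteAt w).2 n).fun_smul_right _)]
    refine finsum_congr fun s ↦ ?_
    simp only [LinearMap.add_apply, LinearMap.smul_apply, coeff]
    congr 2 <;> push_cast <;> ring
  have hcomm (n m : ℤ) : Commute (Lψχ m) (Lbc n) :=
    G.bc.commute_virasoro (-2) 1 _ (fun s j ↦ (G.ψχ.commute_virasoro 0 0 _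
      (fun s' j' ↦ (G.commute_normalOrder_ψχ_normalOrder_bc s' j' s j).symm) m).symm) n
  intro n m
  rw [hsplit, hsplit, hsplit, add_mul_add_sub_add_mul_add (hcomm n m).symm (hcomm m n),
    virasoro_mul_virasoro_sub, virasoro_mul_virasoro_sub, centralSum_eq, centralSum_eq]
  split_ifs <;> module
end
end
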